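/- Roots of the truncated binomial series for √(1−z) lie outside the unit disk. For each integer m ≥ 1 let s_m(z) = Σ_{l=0}^{m} (−1)^l · binom(1/2, l) · z^l, where binom(1/2, l) is the generalized binomial coefficient. Then |1 − s_m(z)| < 1 for every z ∈ ℂ with |z| ≤ 1, and consequently every complex root w of s_m satisfies |w| > 1 (equivalently, writing s_m(z) = ∏_{a=1}^{m}(1 − λ_a^{(m)} z), each λ_a^{(m)} satisfies |λ_a^{(m)}| < 1). -/

import Mathlib

open scoped BigOperators
open Filter

/-- The generalized binomial coefficient `binom(1/2, l)`. -/
noncomputable def halfBinom (l : ℕ) : ℂ :=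
  (∏ i ∈ Finset.range l, ((1 : ℂ) / 2 - (i : ℂ))) / (Nat.factorial l : ℂ)

/-- `s_m(z) = Σ_{l=0}^m (−1)^l binom(1/2,l) z^l`, the `m`-th partial sum of the binomial
series for `√(1−z)`. -/
noncomputable def sFun (m : ℕ) (z : ℂ) : ℂ :=
  ∑ l ∈ Finset.range (m + 1), (-1 : ℂ) ^ l * halfBinom l * z ^ l

/-!
Write `1 - √(1 - z) = Σ_{l ≥ 0} c_l z^l`, so `c_0 = -1` and `c_{l+1} = c_l (l - 1/2)/(l + 1)`.
All `c_l` with `l ≥ 1` are positive, and the partial sums telescope: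
`Σ_{l ≤ m} c_l = -2 (m + 1) c_{m+1}`. Hence for `|z| ≤ 1`,
`|1 - s_m(z)| = |Σ_{l=1}^m c_l z^l| ≤ Σ_{l=1}^m c_l = 1 - 2 (m + 1) c_{m+1} < 1`.
-/

open Finset

/-- The coefficient of `z^l` in `1 - √(1 - z)`. -/
noncomputable def sqrtCoeff (l : ℕ) : ℝ :=
  -(∏ i ∈ range l, ((i : ℝ) - 1 / 2)) / (l.factorial : ℝ)

lemma neg_one_pow_mul_halfBinom (l : ℕ) : (-1 : ℂ) ^ l * halfBinom l = -(sqrtCoeff l : ℂ) := by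
  have hprod : (-1 : ℂ) ^ l * ∏ i ∈ range l, ((1 : ℂ) / 2 - i) =
      ∏ i ∈ range l, ((i : ℂ) - 1 / 2) := by
    rw [← card_range l, ← prod_const, card_range, ← prod_mul_distrib]
    exact prod_congr rfl fun _ _ => by ring
  simp only [halfBinom, sqrtCoeff, mul_div_assoc', hprod]
  push_cast
  ring

lemma sqrtCoeff_zero : sqrtCoeff 0 = -1 := by
  simp [sqrtCoeff]

lemma sqrtCoeff_succ (l : ℕ) :
    sqrtCoeff (l + 1) = sqrtCoeff l * (((l : ℝ) - 1 / 2) / ((l : ℝ) + 1)) := by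
  rw [sqrtCoeff, sqrtCoeff, prod_range_succ, Nat.factorial_succ, Nat.cast_mul, Nat.cast_succ,
    div_mul_div_comm, mul_comm ((l.factorial : ℕ) : ℝ), neg_mul]

lemma sqrtCoeff_succ_pos (l : ℕ) : 0 < sqrtCoeff (l + 1) := by
  induction l with
  | zero => norm_num [sqrtCoeff]
  | succ n ih =>
    rw [sqrtCoeff_succ]
    have hn : (0 : ℝ) < (n + 1 : ℕ) - 1 / 2 := by push_cast; linarith [n.cast_nonneg (α := ℝ)]
    positivity

lemma sum_range_sqrtCoeff (m : ℕ) :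
    ∑ l ∈ range (m + 1), sqrtCoeff l = -(2 * ((m : ℝ) + 1) * sqrtCoeff (m + 1)) := by
  induction m with
  | zero => norm_num [sqrtCoeff]
  | succ n ih =>
    rw [sum_range_succ, ih, sqrtCoeff_succ (n + 1)]
    push_cast
    field_simp
    ring

lemma sum_range_sqrtCoeff_succ_lt_one (m : ℕ) : ∑ l ∈ range m, sqrtCoeff (l + 1) < 1 := by
  have hsum := sum_range_sqrtCoeff m
  rw [sum_range_succ', sqrtCoeff_zero] at hsum
  have := sqrtCoeff_succ_pos m
  nlinarith

lemma one_sub_sFun (m : ℕ) (z : ℂ) :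
    1 - sFun m z = ∑ l ∈ range m, (sqrtCoeff (l + 1) : ℂ) * z ^ (l + 1) := by
  simp only [sFun, neg_one_pow_mul_halfBinom, sum_range_succ' _ m, sqrtCoeff_zero]
  push_cast
  simp only [neg_mul, sum_neg_distrib]
  ring

lemma norm_sum_mul_pow_le_sum {𝕜 ι : Type*} [RCLike 𝕜] (s : Finset ι) {a : ι → ℝ}
    (ha : ∀ i ∈ s, 0 ≤ a i) (n : ι → ℕ) {z : 𝕜} (hz : ‖z‖ ≤ 1) :
    ‖∑ i ∈ s, (a i : 𝕜) * z ^ n i‖ ≤ ∑ i ∈ s, a i := by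
  refine (norm_sum_le _ _).trans (sum_le_sum fun i hi => ?_)
  rw [norm_mul, norm_pow, RCLike.norm_ofReal, abs_of_nonneg (ha i hi)]
  exact mul_le_of_le_one_right (ha i hi) (pow_le_one₀ (norm_nonneg z) hz)

lemma norm_one_sub_sFun_lt_one (m : ℕ) {z : ℂ} (hz : ‖z‖ ≤ 1) : ‖1 - sFun m z‖ < 1 := by
  rw [one_sub_sFun]
  exact (norm_sum_mul_pow_le_sum _ (fun l _ => (sqrtCoeff_succ_pos l).le) _ hz).trans_lt
    (sum_range_sqrtCoeff_succ_lt_one m)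

lemma one_lt_norm_of_norm_one_sub_lt_one {𝕜 : Type*} [NormedRing 𝕜] [NormOneClass 𝕜]
    {f : 𝕜 → 𝕜} (hf : ∀ z, ‖z‖ ≤ 1 → ‖1 - f z‖ < 1) {w : 𝕜} (hw : f w = 0) : 1 < ‖w‖ := by
  by_contra! h
  simpa [hw] using hf w h

/-- If `f z = ∏ a, (1 - λ_a z)`, then `λ_a⁻¹` is a zero of `f`. -/
lemma norm_lt_one_of_eq_prod {𝕜 ι : Type*} [NormedField 𝕜] [Fintype ι] {f : 𝕜 → 𝕜}
    (hf : ∀ w, f w = 0 → 1 < ‖w‖) {lam : ι → 𝕜} (hfac : ∀ z, f z = ∏ a, (1 - lam a * z))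
    (a : ι) : ‖lam a‖ < 1 := by
  rcases eq_or_ne (lam a) 0 with h0 | h0
  · simp [h0]
  have hroot : f (lam a)⁻¹ = 0 := by
    rw [hfac]
    exact prod_eq_zero (mem_univ a) (by rw [mul_inv_cancel₀ h0, sub_self])
  have := hf _ hroot
  rwa [norm_inv, one_lt_inv₀ (norm_pos_iff.mpr h0)] at this

theorem truncated_sqrt_roots_outside_unit_disk_general (m : ℕ) :
    (∀ z : ℂ, ‖z‖ ≤ 1 → ‖1 - sFun m z‖ < 1) ∧
    (∀ w : ℂ, sFun m w = 0 → 1 < ‖w‖) ∧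
    (∀ lam : Fin m → ℂ, (∀ z : ℂ, sFun m z = ∏ a, (1 - lam a * z)) →
      ∀ a, ‖lam a‖ < 1) := by
  have hdisk : ∀ z : ℂ, ‖z‖ ≤ 1 → ‖1 - sFun m z‖ < 1 := fun _ => norm_one_sub_sFun_lt_one m
  have hroots : ∀ w : ℂ, sFun m w = 0 → 1 < ‖w‖ := fun _ =>
    one_lt_norm_of_norm_one_sub_lt_one hdisk
  exact ⟨hdisk, hroots, fun _ hfac => norm_lt_one_of_eq_prod hroots hfac⟩

/-- The roots of the truncated binomial series for `√(1−z)` lie outside the closed unit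
disk: `|1 − s_m(z)| < 1` on the closed unit disk, every root `w` of `s_m` has `|w| > 1`,
and equivalently, in any factorization `s_m(z) = ∏_a (1 − λ_a z)` each `|λ_a| < 1`. -/
theorem truncated_sqrt_roots_outside_unit_disk (m : ℕ) (hm : 1 ≤ m) :
    (∀ z : ℂ, ‖z‖ ≤ 1 → ‖1 - sFun m z‖ < 1) ∧
    (∀ w : ℂ, sFun m w = 0 → 1 < ‖w‖) ∧
    (∀ lam : Fin m → ℂ, (∀ z : ℂ, sFun m z = ∏ a, (1 - lam a * z)) →
      ∀ a, ‖lam a‖ < 1) :=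
  truncated_sqrt_roots_outside_unit_disk_general m
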